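/- Let E be a real inner product space, let d_P denote the Poincaré distance and exp₀ the Poincaré exponential map at the origin. For all u, v ∈ E (with no bound on the norms), one has d_P(exp₀(u), exp₀(v)) ≥ ‖u − v‖; that is, the exponential map at the origin of hyperbolic space does not decrease distances. -/

import Mathlib

/-- Inverse hyperbolic cosine: `arcosh z = log (z + √(z² − 1))` for `z ≥ 1`. -/
noncomputable def arcosh (z : ℝ) : ℝ := Real.log (z + Real.sqrt (z ^ 2 - 1))

/-- The Poincaré exponential map at the origin:
`exp₀ u = tanh(‖u‖/2) · u/‖u‖` (and `exp₀ 0 = 0`). -/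
noncomputable def poincareExp {E : Type*} [NormedAddCommGroup E] [InnerProductSpace ℝ E]
    (u : E) : E :=
  Real.tanh (‖u‖ / 2) • ‖u‖⁻¹ • u

/-- The Poincaré distance on the open unit ball:
`d_P(x,y) = arcosh (1 + 2‖x−y‖² / ((1−‖x‖²)(1−‖y‖²)))`. -/
noncomputable def poincareDist {E : Type*} [NormedAddCommGroup E] [InnerProductSpace ℝ E]
    (x y : E) : ℝ :=
  arcosh (1 + 2 * ‖x - y‖ ^ 2 / ((1 - ‖x‖ ^ 2) * (1 - ‖y‖ ^ 2)))

lemma sinh_mul_le {x y : ℝ} (hx : 0 ≤ x) (hxy : x ≤ y) :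
    y * Real.sinh x ≤ x * Real.sinh y := by
  set f : ℝ → ℝ := fun t => x * Real.sinh (y * t) - y * Real.sinh (x * t) with hf
  have hd : ∀ t : ℝ, HasDerivAt f (x * y * (Real.cosh (y * t) - Real.cosh (x * t))) t := by
    intro t
    have h1 : HasDerivAt (fun t : ℝ => Real.sinh (y * t)) (Real.cosh (y * t) * y) t := by
      simpa [Function.comp_def] using (Real.hasDerivAt_sinh (y * t)).comp t ((hasDerivAt_id t).const_mul y)
    have h2 : HasDerivAt (fun t : ℝ => Real.sinh (x * t)) (Real.cosh (x * t) * x) t := by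
      simpa [Function.comp_def] using (Real.hasDerivAt_sinh (x * t)).comp t ((hasDerivAt_id t).const_mul x)
    have : HasDerivAt f (x * (Real.cosh (y * t) * y) - y * (Real.cosh (x * t) * x)) t :=
      ((h1.const_mul x).sub (h2.const_mul y))
    convert this using 1
    ring
  have hmono : MonotoneOn f (Set.Icc 0 1) := by
    apply monotoneOn_of_deriv_nonneg (convex_Icc 0 1)
    · exact fun t _ => ((hd t).differentiableAt.continuousAt).continuousWithinAt
    · intro t ht
      exact (hd t).differentiableAt.differentiableWithinAt
    · intro t ht
      rw [interior_Icc] at ht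
      rw [(hd t).deriv]
      have : Real.cosh (x * t) ≤ Real.cosh (y * t) := by
        rw [Real.cosh_le_cosh, abs_of_nonneg (mul_nonneg hx ht.1.le),
          abs_of_nonneg (by nlinarith [ht.1.le, hx, hxy] : (0:ℝ) ≤ y * t)]
        nlinarith [ht.1.le]
      have hy : (0:ℝ) ≤ y := hx.trans hxy
      exact mul_nonneg (mul_nonneg hx hy) (sub_nonneg.2 this)
  have h1 : f 0 ≤ f 1 := hmono (by simp) (by simp) zero_le_one
  simp only [hf, mul_one, mul_zero, Real.sinh_zero, sub_zero] at h1
  linarith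

lemma arcosh_cosh {t : ℝ} (ht : 0 ≤ t) : arcosh (Real.cosh t) = t := by
  unfold arcosh
  have h1 : Real.cosh t ^ 2 - 1 = Real.sinh t ^ 2 := by
    have := Real.cosh_sq_sub_sinh_sq t; linarith
  rw [h1, Real.sqrt_sq (Real.sinh_nonneg_iff.2 ht), Real.cosh_add_sinh, Real.log_exp]

lemma arcosh_le_arcosh {a b : ℝ} (ha : 1 ≤ a) (hab : a ≤ b) : arcosh a ≤ arcosh b := by
  unfold arcosh
  apply Real.log_le_log (by positivity)
  have : Real.sqrt (a ^ 2 - 1) ≤ Real.sqrt (b ^ 2 - 1) :=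
    Real.sqrt_le_sqrt (by nlinarith)
  linarith

lemma key_ineq {A B t : ℝ} (hA : 0 < A) (hB : 0 < B) (h1 : |A - B| ≤ t) (h2 : t ≤ A + B) :
    A * B * Real.cosh t ≤
      A * B * (Real.cosh A * Real.cosh B)
        - (A ^ 2 + B ^ 2 - t ^ 2) / 2 * (Real.sinh A * Real.sinh B) := by
  set s := |A - B| with hs
  set p := (t + s) / 2 with hp
  set q := (t - s) / 2 with hq
  have hs0 : 0 ≤ s := abs_nonneg _
  have hq0 : 0 ≤ q := by simp [hq]; linarith
  have hp0 : 0 ≤ p := by simp [hp]; linarith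
  have hAB' : A * B * (Real.sinh p * Real.sinh q)
      ≤ (t ^ 2 - (A - B) ^ 2) / 4 * (Real.sinh A * Real.sinh B) := by
    have hpq : p * q = (t ^ 2 - (A - B) ^ 2) / 4 := by
      rw [hp, hq]
      have : s ^ 2 = (A - B) ^ 2 := by rw [hs, sq_abs]
      nlinarith [this]
    rcases le_total A B with hAB | hAB
    · have hsv : s = B - A := by rw [hs, abs_of_nonpos (by linarith)]; ring
      have hpM : p ≤ B := by rw [hp, hsv]; linarith
      have hqm : q ≤ A := by rw [hq, hsv]; linarith
      have h3 := sinh_mul_le hp0 hpM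
      have h4 := sinh_mul_le hq0 hqm
      calc A * B * (Real.sinh p * Real.sinh q)
          = (B * Real.sinh p) * (A * Real.sinh q) := by ring
        _ ≤ (p * Real.sinh B) * (q * Real.sinh A) :=
            mul_le_mul h3 h4 (mul_nonneg hA.le (Real.sinh_nonneg_iff.2 hq0))
              (mul_nonneg hp0 (Real.sinh_nonneg_iff.2 (by linarith)))
        _ = p * q * (Real.sinh A * Real.sinh B) := by ring
        _ = (t ^ 2 - (A - B) ^ 2) / 4 * (Real.sinh A * Real.sinh B) := by rw [hpq]
    · have hsv : s = A - B := by rw [hs, abs_of_nonneg (by linarith)]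
      have hpM : p ≤ A := by rw [hp, hsv]; linarith
      have hqm : q ≤ B := by rw [hq, hsv]; linarith
      have h3 := sinh_mul_le hp0 hpM
      have h4 := sinh_mul_le hq0 hqm
      calc A * B * (Real.sinh p * Real.sinh q)
          = (A * Real.sinh p) * (B * Real.sinh q) := by ring
        _ ≤ (p * Real.sinh A) * (q * Real.sinh B) :=
            mul_le_mul h3 h4 (mul_nonneg hB.le (Real.sinh_nonneg_iff.2 hq0))
              (mul_nonneg hp0 (Real.sinh_nonneg_iff.2 (by linarith)))
        _ = p * q * (Real.sinh A * Real.sinh B) := by ring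
        _ = (t ^ 2 - (A - B) ^ 2) / 4 * (Real.sinh A * Real.sinh B) := by rw [hpq]
  have e1 : Real.cosh t - Real.cosh s = 2 * (Real.sinh p * Real.sinh q) := by
    have et : t = p + q := by rw [hp, hq]; ring
    have es : s = p - q := by rw [hp, hq]; ring
    rw [et, es, Real.cosh_add, Real.cosh_sub]; ring
  have e2 : Real.cosh s = Real.cosh A * Real.cosh B - Real.sinh A * Real.sinh B := by
    rw [hs, Real.cosh_abs, Real.cosh_sub]
  have e1' : A * B * Real.cosh t
      = A * B * Real.cosh s + 2 * (A * B * (Real.sinh p * Real.sinh q)) := by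
    linear_combination (A * B) * e1
  have e2' : A * B * Real.cosh s
      = A * B * (Real.cosh A * Real.cosh B) - A * B * (Real.sinh A * Real.sinh B) := by
    linear_combination (A * B) * e2
  nlinarith [e1', e2', hAB']

lemma tanh_nonneg' {x : ℝ} (hx : 0 ≤ x) : 0 ≤ Real.tanh x := by
  rw [Real.tanh_eq_sinh_div_cosh]
  exact div_nonneg (Real.sinh_nonneg_iff.2 hx) (Real.cosh_pos x).le

lemma norm_poincareExp {E : Type*} [NormedAddCommGroup E] [InnerProductSpace ℝ E]
    (u : E) : ‖poincareExp u‖ = Real.tanh (‖u‖ / 2) := by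
  by_cases hu : u = 0
  · simp [poincareExp, hu]
  · have hA : ‖u‖ ≠ 0 := norm_ne_zero_iff.2 hu
    rw [poincareExp, norm_smul, norm_smul, norm_inv, norm_norm, Real.norm_eq_abs,
      abs_of_nonneg (tanh_nonneg' (by positivity)), inv_mul_cancel₀ hA, mul_one]

lemma inner_poincareExp {E : Type*} [NormedAddCommGroup E] [InnerProductSpace ℝ E]
    (u v : E) : (inner ℝ (poincareExp u) (poincareExp v) : ℝ)
      = Real.tanh (‖u‖ / 2) * Real.tanh (‖v‖ / 2) * (‖u‖⁻¹ * ‖v‖⁻¹) * inner ℝ u v := by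
  rw [poincareExp, poincareExp, real_inner_smul_left, real_inner_smul_left,
    real_inner_smul_right, real_inner_smul_right]
  ring

lemma one_sub_tanh_sq (x : ℝ) : 1 - Real.tanh x ^ 2 = (Real.cosh x ^ 2)⁻¹ := by
  rw [Real.tanh_eq_sinh_div_cosh]
  have hc := (Real.cosh_pos x).ne'
  have h := Real.cosh_sq_sub_sinh_sq x
  field_simp
  exact h

lemma one_sub_tanh_sq_ne (x : ℝ) : 1 - Real.tanh x ^ 2 ≠ 0 := by
  rw [one_sub_tanh_sq]; positivity

lemma cosh_eq_tanh_half (A : ℝ) :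
    Real.cosh A = (1 + Real.tanh (A / 2) ^ 2) / (1 - Real.tanh (A / 2) ^ 2) := by
  have hc := (Real.cosh_pos (A / 2)).ne'
  have pa := Real.cosh_sq_sub_sinh_sq (A / 2)
  have eA : Real.cosh A = Real.cosh (A / 2) ^ 2 + Real.sinh (A / 2) ^ 2 := by
    have := Real.cosh_two_mul (A / 2); rw [show 2 * (A / 2) = A by ring] at this; linarith
  rw [eA, Real.tanh_eq_sinh_div_cosh]
  field_simp
  linarith

lemma sinh_eq_tanh_half (A : ℝ) :
    Real.sinh A = 2 * Real.tanh (A / 2) / (1 - Real.tanh (A / 2) ^ 2) := by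
  have hc := (Real.cosh_pos (A / 2)).ne'
  have pa := Real.cosh_sq_sub_sinh_sq (A / 2)
  have esA : Real.sinh A = 2 * Real.sinh (A / 2) * Real.cosh (A / 2) := by
    have := Real.sinh_two_mul (A / 2); rw [show 2 * (A / 2) = A by ring] at this; linarith
  rw [esA, Real.tanh_eq_sinh_div_cosh]
  field_simp
  linear_combination Real.sinh (A / 2) * pa

lemma le_poincareDist_zero {E : Type*} [NormedAddCommGroup E] [InnerProductSpace ℝ E]
    (u : E) : ‖u‖ ≤ poincareDist (poincareExp u) 0 := by
  have harg : 1 + 2 * ‖poincareExp u - 0‖ ^ 2 / ((1 - ‖poincareExp u‖ ^ 2) * (1 - ‖(0:E)‖ ^ 2))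
      = Real.cosh ‖u‖ := by
    have h1 := one_sub_tanh_sq_ne (‖u‖ / 2)
    rw [sub_zero, norm_poincareExp, norm_zero, cosh_eq_tanh_half ‖u‖]
    field_simp
    ring
  rw [poincareDist, harg, arcosh_cosh (norm_nonneg u)]

lemma poincareDist_comm {E : Type*} [NormedAddCommGroup E] [InnerProductSpace ℝ E]
    (x y : E) : poincareDist x y = poincareDist y x := by
  rw [poincareDist, poincareDist, norm_sub_rev]
  congr 2
  ring

/-- Lower-bound half of Theorem 1, valid globally: the exponential map at the origin
of hyperbolic space does not decrease distances. -/
theorem poincare_exp_nondecreasing {E : Type*} [NormedAddCommGroup E]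
    [InnerProductSpace ℝ E] (u v : E) :
    ‖u - v‖ ≤ poincareDist (poincareExp u) (poincareExp v) := by
  by_cases hv : v = 0
  · rw [hv, sub_zero, show poincareExp (0:E) = 0 by simp [poincareExp]]
    exact le_poincareDist_zero u
  by_cases hu : u = 0
  · rw [hu, zero_sub, norm_neg, show poincareExp (0:E) = 0 by simp [poincareExp],
      poincareDist_comm]
    exact le_poincareDist_zero v
  have hA : (0:ℝ) < ‖u‖ := norm_pos_iff.2 hu
  have hB : (0:ℝ) < ‖v‖ := norm_pos_iff.2 hv
  have habs : |‖u‖ - ‖v‖| ≤ ‖u - v‖ := abs_norm_sub_norm_le u v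
  have htri : ‖u - v‖ ≤ ‖u‖ + ‖v‖ := norm_sub_le u v
  have hP : (inner ℝ u v : ℝ) = (‖u‖ ^ 2 + ‖v‖ ^ 2 - ‖u - v‖ ^ 2) / 2 := by
    have := norm_sub_sq_real u v; linarith
  have hZ : 1 + 2 * ‖poincareExp u - poincareExp v‖ ^ 2
        / ((1 - ‖poincareExp u‖ ^ 2) * (1 - ‖poincareExp v‖ ^ 2))
      = Real.cosh ‖u‖ * Real.cosh ‖v‖
        - (‖u‖ ^ 2 + ‖v‖ ^ 2 - ‖u - v‖ ^ 2) / 2 * (Real.sinh ‖u‖ * Real.sinh ‖v‖) / (‖u‖ * ‖v‖) := by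
    have h1 := one_sub_tanh_sq_ne (‖u‖ / 2)
    have h2 := one_sub_tanh_sq_ne (‖v‖ / 2)
    have hA' := hA.ne'
    have hB' := hB.ne'
    rw [norm_sub_sq_real, inner_poincareExp, norm_poincareExp, norm_poincareExp, hP,
      cosh_eq_tanh_half ‖u‖, cosh_eq_tanh_half ‖v‖, sinh_eq_tanh_half ‖u‖, sinh_eq_tanh_half ‖v‖]
    field_simp
    ring
  have hcosh : Real.cosh ‖u - v‖
      ≤ Real.cosh ‖u‖ * Real.cosh ‖v‖
        - (‖u‖ ^ 2 + ‖v‖ ^ 2 - ‖u - v‖ ^ 2) / 2 * (Real.sinh ‖u‖ * Real.sinh ‖v‖) / (‖u‖ * ‖v‖) := by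
    have hk := key_ineq hA hB habs htri
    have hABpos : (0:ℝ) < ‖u‖ * ‖v‖ := by positivity
    rw [← mul_le_mul_iff_right₀ hABpos]
    calc ‖u‖ * ‖v‖ * Real.cosh ‖u - v‖
        ≤ ‖u‖ * ‖v‖ * (Real.cosh ‖u‖ * Real.cosh ‖v‖)
          - (‖u‖ ^ 2 + ‖v‖ ^ 2 - ‖u - v‖ ^ 2) / 2 * (Real.sinh ‖u‖ * Real.sinh ‖v‖) := hk
      _ = ‖u‖ * ‖v‖ * (Real.cosh ‖u‖ * Real.cosh ‖v‖
          - (‖u‖ ^ 2 + ‖v‖ ^ 2 - ‖u - v‖ ^ 2) / 2 * (Real.sinh ‖u‖ * Real.sinh ‖v‖) / (‖u‖ * ‖v‖)) := by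
          field_simp
  rw [poincareDist, hZ]
  calc ‖u - v‖ = arcosh (Real.cosh ‖u - v‖) := (arcosh_cosh (norm_nonneg _)).symm
    _ ≤ _ := arcosh_le_arcosh (Real.one_le_cosh _) hcosh
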